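/- In G_pos, restricting both players to their 'canonical' moves (Player 1 always sets a chosen variable to True, Player 2 always to False) yields an equivalent game: Player 1 wins the restricted game iff Player 1 wins the original G_pos game. -/
import Mathlib


/-- Evaluation of a positive CNF formula (a list of clauses of un-negated variables). -/
def PosEval {n : ℕ} (F : List (List (Fin n))) (σ : Fin n → Bool) : Prop :=
  ∀ c ∈ F, ∃ v ∈ c, σ v = true

/-- Player 1 has a winning strategy in the original game G_pos, where each
player may assign the chosen unset variable either Boolean value. -/
def GposWin {n : ℕ} (F : List (List (Fin n))) :
    ℕ → Finset (Fin n) → (Fin n → Bool) → Bool → Prop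
  | 0, _, σ, _ => PosEval F σ
  | fuel + 1, unset, σ, true =>
      ∃ v ∈ unset, ∃ b : Bool,
        GposWin F fuel (unset.erase v) (Function.update σ v b) false
  | fuel + 1, unset, σ, false =>
      ∀ v ∈ unset, ∀ b : Bool,
        GposWin F fuel (unset.erase v) (Function.update σ v b) true

/-- Player 1 has a winning strategy in the restricted game: on each turn a
player chooses an unset variable; Player 1's choice is set True, Player 2's
choice is set False. -/
def GposWinRestricted {n : ℕ} (F : List (List (Fin n))) :
    ℕ → Finset (Fin n) → (Fin n → Bool) → Bool → Prop
  | 0, _, σ, _ => PosEval F σ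
  | fuel + 1, unset, σ, true =>
      ∃ v ∈ unset,
        GposWinRestricted F fuel (unset.erase v) (Function.update σ v true) false
  | fuel + 1, unset, σ, false =>
      ∀ v ∈ unset,
        GposWinRestricted F fuel (unset.erase v) (Function.update σ v false) true

section Aux
variable {n : ℕ}

lemma posEval_mono (F : List (List (Fin n))) {σ σ' : Fin n → Bool}
    (h : ∀ v, σ v = true → σ' v = true) (hE : PosEval F σ) : PosEval F σ' := by
  intro c hc
  obtain ⟨v, hv, hvt⟩ := hE c hc
  exact ⟨v, hv, h v hvt⟩

lemma update_le_update {σ σ' : Fin n → Bool} (h : ∀ v, σ v = true → σ' v = true)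
    (v : Fin n) (b : Bool) : ∀ w, Function.update σ v b w = true → Function.update σ' v b w = true := by
  intro w
  rcases eq_or_ne w v with rfl | hw
  · simp
  · simp [Function.update_of_ne hw]
    exact h w

lemma update_false_le {σ : Fin n → Bool} (v : Fin n) (b : Bool) :
    ∀ w, Function.update σ v false w = true → Function.update σ v b w = true := by
  intro w
  rcases eq_or_ne w v with rfl | hw
  · simp
  · simp [Function.update_of_ne hw]

lemma update_le_true {σ : Fin n → Bool} (v : Fin n) (b : Bool) :
    ∀ w, Function.update σ v b w = true → Function.update σ v true w = true := by
  intro w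
  rcases eq_or_ne w v with rfl | hw
  · simp
  · simp [Function.update_of_ne hw]

lemma restricted_mono (F : List (List (Fin n))) :
    ∀ fuel unset (σ σ' : Fin n → Bool) p, (∀ v, σ v = true → σ' v = true) →
      GposWinRestricted F fuel unset σ p → GposWinRestricted F fuel unset σ' p := by
  intro fuel
  induction fuel with
  | zero => intro _ σ σ' p h hw; exact posEval_mono F h hw
  | succ k ih =>
    intro unset σ σ' p h hw
    cases p with
    | true =>
      obtain ⟨v, hv, hw⟩ := hw
      exact ⟨v, hv, ih _ _ _ _ (update_le_update h v true) hw⟩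
    | false =>
      intro v hv
      exact ih _ _ _ _ (update_le_update h v false) (hw v hv)

lemma gpos_mono (F : List (List (Fin n))) :
    ∀ fuel unset (σ σ' : Fin n → Bool) p, (∀ v, σ v = true → σ' v = true) →
      GposWin F fuel unset σ p → GposWin F fuel unset σ' p := by
  intro fuel
  induction fuel with
  | zero => intro _ σ σ' p h hw; exact posEval_mono F h hw
  | succ k ih =>
    intro unset σ σ' p h hw
    cases p with
    | true =>
      obtain ⟨v, hv, b, hw⟩ := hw
      exact ⟨v, hv, b, ih _ _ _ _ (update_le_update h v b) hw⟩
    | false =>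
      intro v hv b
      exact ih _ _ _ _ (update_le_update h v b) (hw v hv b)

lemma restricted_to_full (F : List (List (Fin n))) :
    ∀ fuel unset (σ : Fin n → Bool) p,
      GposWinRestricted F fuel unset σ p → GposWin F fuel unset σ p := by
  intro fuel
  induction fuel with
  | zero => intro _ _ p hw; exact hw
  | succ k ih =>
    intro unset σ p hw
    cases p with
    | true =>
      obtain ⟨v, hv, hw⟩ := hw
      exact ⟨v, hv, true, ih _ _ _ hw⟩
    | false =>
      intro v hv b
      exact ih _ _ _ (restricted_mono F _ _ _ _ _ (update_false_le v b) (hw v hv))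

lemma full_to_restricted (F : List (List (Fin n))) :
    ∀ fuel unset (σ : Fin n → Bool) p,
      GposWin F fuel unset σ p → GposWinRestricted F fuel unset σ p := by
  intro fuel
  induction fuel with
  | zero => intro _ _ p hw; exact hw
  | succ k ih =>
    intro unset σ p hw
    cases p with
    | true =>
      obtain ⟨v, hv, b, hw⟩ := hw
      exact ⟨v, hv, ih _ _ _ (gpos_mono F _ _ _ _ _ (update_le_true v b) hw)⟩
    | false =>
      intro v hv
      exact ih _ _ _ (hw v hv false)

end Aux

/-- Restricting both players to their canonical moves (Player 1 always sets its
chosen variable True, Player 2 always False) yields an equivalent game: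
Player 1 wins the restricted game iff Player 1 wins the original G_pos game. -/
theorem gpos_restricted_equiv {n : ℕ} (F : List (List (Fin n))) :
    GposWinRestricted F n Finset.univ (fun _ => false) true ↔
      GposWin F n Finset.univ (fun _ => false) true := by
  exact ⟨restricted_to_full F _ _ _ _, full_to_restricted F _ _ _ _⟩
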